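/- arXiv:1707.09799 — 2 statements merged into one kernel-verified Lean document; each statement's English description precedes it below -/
import Mathlib

section
/- Suppose ι is defined on product admissible pairs by ι(f × g, U × V) = ind_n(f,U) · ind_m(g,V), where ind_n and ind_m satisfy additivity and the solution property. If Fix(f × g) ∩ (U × V) ⊆ (U₁ × V₁) ⊔ (U₂ × V₂) with U₁,U₂ disjoint open and V₁,V₂ disjoint open, then ι(f × g, U × V) = ι(f × g, U₁ × V₁) + ι(f × g, U₂ × V₂). -/
/-!
The fixed points of `f × g` in `U × V` are exactly `(Fix f ∩ U) × (Fix g ∩ V)`. If either factor is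
empty, the solution property kills every index on that side and both sides of the identity vanish.
Otherwise a fixed point on one side shows that the fixed points on the other side are covered by the
two open pieces, so both factors split by additivity; of the four products, the two cross terms
`ind(f, U₁) · ind(g, V₂)` and `ind(f, U₂) · ind(g, V₁)` vanish, because disjointness forbids fixed
points in `U₁ × V₂` and `U₂ × V₁`.
-/

namespace MultivaluedMap

variable {X Y : Type*}

def fixIn (f : X → Finset X) (U : Set X) : Set X := {x | x ∈ U ∧ x ∈ f x}

theorem fixIn_subset (f : X → Finset X) (U : Set X) : fixIn f U ⊆ U := fun _ hx => hx.1

theorem fixIn_mono (f : X → Finset X) {W U : Set X} (h : W ⊆ U) : fixIn f W ⊆ fixIn f U :=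
  fun _ hx => ⟨h hx.1, hx.2⟩

theorem fixIn_prod (f : X → Finset X) (g : Y → Finset Y) (U : Set X) (V : Set Y) :
    {p : X × Y | p ∈ (f p.1) ×ˢ (g p.2)} ∩ (U ×ˢ V) = fixIn f U ×ˢ fixIn g V := by
  ext ⟨x, y⟩
  simp only [fixIn, Set.mem_inter_iff, Set.mem_ofPred_eq, Finset.mem_product, Set.mem_prod]
  tauto

theorem index_eq_zero_of_fixIn_eq_empty [TopologicalSpace X] {f : X → Finset X}
    {ind : Set X → ℝ}
    (hsol : ∀ U : Set X, IsOpen U → IsCompact (fixIn f U) → ind U ≠ 0 → (fixIn f U).Nonempty)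
    {W : Set X} (hW : IsOpen W) (hfix : fixIn f W = ∅) : ind W = 0 := by
  by_contra hne
  simpa [hfix] using hsol W hW (hfix ▸ isCompact_empty) hne

end MultivaluedMap

namespace Set

variable {X Y : Type*} {A U₁ U₂ : Set X} {B V₁ V₂ : Set Y}

theorem subset_union_of_prod_subset_union_prod_left
    (h : A ×ˢ B ⊆ U₁ ×ˢ V₁ ∪ U₂ ×ˢ V₂) (hB : B.Nonempty) : A ⊆ U₁ ∪ U₂ := by
  obtain ⟨y, hy⟩ := hB
  intro x hx
  rcases h (mk_mem_prod hx hy) with ⟨hx₁, -⟩ | ⟨hx₂, -⟩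
  exacts [Or.inl hx₁, Or.inr hx₂]

theorem subset_union_of_prod_subset_union_prod_right
    (h : A ×ˢ B ⊆ U₁ ×ˢ V₁ ∪ U₂ ×ˢ V₂) (hA : A.Nonempty) : B ⊆ V₁ ∪ V₂ := by
  obtain ⟨x, hx⟩ := hA
  intro y hy
  rcases h (mk_mem_prod hx hy) with ⟨-, hy₁⟩ | ⟨-, hy₂⟩
  exacts [Or.inl hy₁, Or.inr hy₂]

theorem eq_empty_or_eq_empty_of_prod_subset_union_prod
    (h : A ×ˢ B ⊆ U₁ ×ˢ V₁ ∪ U₂ ×ˢ V₂) (hU : Disjoint U₁ U₂) (hV : Disjoint V₁ V₂)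
    (hAU : A ⊆ U₁) (hBV : B ⊆ V₂) : A = ∅ ∨ B = ∅ := by
  refine prod_eq_empty_iff.mp (eq_empty_of_forall_notMem fun ⟨x, y⟩ hxy => ?_)
  rcases h hxy with ⟨-, hy₁⟩ | ⟨hx₂, -⟩
  · exact disjoint_left.mp hV hy₁ (hBV hxy.2)
  · exact disjoint_left.mp hU (hAU hxy.1) hx₂

end Set

open MultivaluedMap Set

/-- The product index ι(f × g, U × V) = ind_n(f,U)·ind_m(g,V) satisfies additivity,
given that ind_n and ind_m satisfy additivity and the solution property. -/
theorem product_index_additivity {X Y : Type*} [TopologicalSpace X] [TopologicalSpace Y]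
    {n m : ℕ}
    (indn : (X → Finset X) → Set X → ℝ) (indm : (Y → Finset Y) → Set Y → ℝ)
    (haddn : ∀ (f : X → Finset X), (∀ x, (f x).card = n) →
      ∀ U U₁ U₂ : Set X, IsOpen U → IsCompact {x | x ∈ U ∧ x ∈ f x} →
      IsOpen U₁ → IsOpen U₂ → U₁ ⊆ U → U₂ ⊆ U → Disjoint U₁ U₂ →
      {x | x ∈ U ∧ x ∈ f x} ⊆ U₁ ∪ U₂ → indn f U = indn f U₁ + indn f U₂)
    (haddm : ∀ (g : Y → Finset Y), (∀ y, (g y).card = m) →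
      ∀ V V₁ V₂ : Set Y, IsOpen V → IsCompact {y | y ∈ V ∧ y ∈ g y} →
      IsOpen V₁ → IsOpen V₂ → V₁ ⊆ V → V₂ ⊆ V → Disjoint V₁ V₂ →
      {y | y ∈ V ∧ y ∈ g y} ⊆ V₁ ∪ V₂ → indm g V = indm g V₁ + indm g V₂)
    (hsoln : ∀ (f : X → Finset X), (∀ x, (f x).card = n) →
      ∀ U : Set X, IsOpen U → IsCompact {x | x ∈ U ∧ x ∈ f x} →
      indn f U ≠ 0 → {x | x ∈ U ∧ x ∈ f x}.Nonempty)
    (hsolm : ∀ (g : Y → Finset Y), (∀ y, (g y).card = m) →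
      ∀ V : Set Y, IsOpen V → IsCompact {y | y ∈ V ∧ y ∈ g y} →
      indm g V ≠ 0 → {y | y ∈ V ∧ y ∈ g y}.Nonempty)
    (f : X → Finset X) (hf : ∀ x, (f x).card = n)
    (g : Y → Finset Y) (hg : ∀ y, (g y).card = m)
    (U U₁ U₂ : Set X) (V V₁ V₂ : Set Y)
    (hU : IsOpen U) (hV : IsOpen V)
    (hUc : IsCompact {x | x ∈ U ∧ x ∈ f x}) (hVc : IsCompact {y | y ∈ V ∧ y ∈ g y})
    (hU₁ : IsOpen U₁) (hU₂ : IsOpen U₂) (hV₁ : IsOpen V₁) (hV₂ : IsOpen V₂)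
    (hU₁U : U₁ ⊆ U) (hU₂U : U₂ ⊆ U) (hV₁V : V₁ ⊆ V) (hV₂V : V₂ ⊆ V)
    (hUd : Disjoint U₁ U₂) (hVd : Disjoint V₁ V₂)
    (hcover : {p : X × Y | p ∈ (f p.1) ×ˢ (g p.2)} ∩ (U ×ˢ V) ⊆
      (U₁ ×ˢ V₁) ∪ (U₂ ×ˢ V₂)) :
    indn f U * indm g V = indn f U₁ * indm g V₁ + indn f U₂ * indm g V₂ := by
  rw [fixIn_prod] at hcover
  have zero_n := fun {W} => index_eq_zero_of_fixIn_eq_empty (W := W) (hsoln f hf)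
  have zero_m := fun {W} => index_eq_zero_of_fixIn_eq_empty (W := W) (hsolm g hg)
  rcases (fixIn f U).eq_empty_or_nonempty with hFe | hFne
  · rw [zero_n hU hFe, zero_n hU₁ (subset_eq_empty (fixIn_mono f hU₁U) hFe),
      zero_n hU₂ (subset_eq_empty (fixIn_mono f hU₂U) hFe)]
    ring
  rcases (fixIn g V).eq_empty_or_nonempty with hGe | hGne
  · rw [zero_m hV hGe, zero_m hV₁ (subset_eq_empty (fixIn_mono g hV₁V) hGe),
      zero_m hV₂ (subset_eq_empty (fixIn_mono g hV₂V) hGe)]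
    ring
  have cross₁₂ : indn f U₁ * indm g V₂ = 0 := by
    rcases eq_empty_or_eq_empty_of_prod_subset_union_prod
        ((prod_mono (fixIn_mono f hU₁U) (fixIn_mono g hV₂V)).trans hcover) hUd hVd
        (fixIn_subset f U₁) (fixIn_subset g V₂) with h | h
    · rw [zero_n hU₁ h, zero_mul]
    · rw [zero_m hV₂ h, mul_zero]
  have cross₂₁ : indn f U₂ * indm g V₁ = 0 := by
    rcases eq_empty_or_eq_empty_of_prod_subset_union_prod
        ((prod_mono (fixIn_mono f hU₂U) (fixIn_mono g hV₁V)).trans (union_comm _ _ ▸ hcover))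
        hUd.symm hVd.symm (fixIn_subset f U₂) (fixIn_subset g V₁) with h | h
    · rw [zero_n hU₂ h, zero_mul]
    · rw [zero_m hV₁ h, mul_zero]
  rw [haddn f hf U U₁ U₂ hU hUc hU₁ hU₂ hU₁U hU₂U hUd
      (subset_union_of_prod_subset_union_prod_left hcover hGne),
    haddm g hg V V₁ V₂ hV hVc hV₁ hV₂ hV₁V hV₂V hVd
      (subset_union_of_prod_subset_union_prod_right hcover hFne)]
  linear_combination cross₁₂ + cross₂₁
end

section
/- Let ι₁ and ι₂ be real-valued functions on admissible pairs of n-valued maps on a finite polyhedron X, both satisfying the Homotopy, Additivity, and Splitting axioms. Then ι₁ = ι₂, assuming every admissible pair is admissibly homotopic to a fix-finite pair whose fixed points admit simply connected isolating neighborhoods on which the map splits. -/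
/-- Ordered tuples of n distinct points, up to permutation. -/
def configSetoid (n : ℕ) (Y : Type*) :
    Setoid {t : Fin n → Y // Function.Injective t} where
  r t t' := ∃ σ : Equiv.Perm (Fin n), t.1 = t'.1 ∘ σ
  iseqv := by
    refine ⟨fun t => ⟨Equiv.refl _, rfl⟩, ?_, ?_⟩
    · rintro t t' ⟨σ, h⟩
      exact ⟨σ.symm, by funext i; simp [h]⟩
    · rintro t t' t'' ⟨σ, h⟩ ⟨τ, h'⟩
      exact ⟨σ.trans τ, by funext i; simp [h, h']⟩

/-- The unordered configuration space of n distinct points of Y. -/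
def UConf (n : ℕ) (Y : Type*) [TopologicalSpace Y] : Type _ :=
  Quotient (configSetoid n Y)

instance (n : ℕ) (Y : Type*) [TopologicalSpace Y] : TopologicalSpace (UConf n Y) :=
  inferInstanceAs (TopologicalSpace (Quotient (configSetoid n Y)))

/-- Membership of a point in an unordered configuration. -/
def memUC {n : ℕ} {Y : Type*} [TopologicalSpace Y] (y : Y) (s : UConf n Y) : Prop :=
  ∃ t : {t : Fin n → Y // Function.Injective t},
    (Quotient.mk (configSetoid n Y) t = s) ∧ ∃ i, t.1 i = y

variable {X : Type*} [TopologicalSpace X] {n : ℕ}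

/-- The fixed point set of an n-valued map inside U. -/
def FixIn (f : X → UConf n X) (U : Set X) : Set X :=
  {x | x ∈ U ∧ memUC x (f x)}

/-- Admissible pair: f is a continuous n-valued map, U is open, Fix(f) ∩ U compact. -/
def Adm (f : X → UConf n X) (U : Set X) : Prop :=
  Continuous f ∧ IsOpen U ∧ IsCompact (FixIn f U)

/-- Admissible homotopy between (f,U) and (g,U). -/
def AdmHomotopic (f g : X → UConf n X) (U : Set X) : Prop :=
  ∃ H : X → ℝ → UConf n X, Continuous ↿H ∧
    (∀ x, H x 0 = f x) ∧ (∀ x, H x 1 = g x) ∧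
    IsCompact {p : X × ℝ | p.2 ∈ Set.Icc (0 : ℝ) 1 ∧ p.1 ∈ U ∧ memUC p.1 (H p.1 p.2)}

/-- f splits on U with splitting maps F₁,…,Fₙ. -/
def SplitsOn (f : X → UConf n X) (U : Set X) (F : Fin n → X → X) : Prop :=
  (∀ i, ContinuousOn (F i) U) ∧
  (∀ x ∈ U, Function.Injective fun i => F i x) ∧
  (∀ x ∈ U, ∀ y, memUC y (f x) ↔ ∃ i, F i x = y)

/-- The Homotopy, Additivity, and Splitting axioms for a putative index ι,
relative to the classical single-valued fixed point index `ind`. -/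
def IndexAxioms (ind : (X → X) → Set X → ℝ)
    (ι : (X → UConf n X) → Set X → ℝ) : Prop :=
  -- Homotopy
  (∀ f g U, Adm f U → Adm g U → AdmHomotopic f g U → ι f U = ι g U) ∧
  -- Additivity
  (∀ f U U₁ U₂, Adm f U → IsOpen U₁ → IsOpen U₂ → U₁ ⊆ U → U₂ ⊆ U →
    Disjoint U₁ U₂ → FixIn f U ⊆ U₁ ∪ U₂ → ι f U = ι f U₁ + ι f U₂) ∧
  -- Splitting
  (∀ f U F x, Adm f U → SplitsOn f U F → FixIn f U = {x} →
    ∀ i, F i x = x → ι f U = ind (F i) U)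

/-!
Replace an admissible pair by a homotopic fix-finite one; by the Homotopy axiom both indices are
unchanged. In a Hausdorff space a fixed point `x` and the finitely many others are separated by
disjoint open sets, and shrinking the first into a neighbourhood where the map splits, Additivity
peels off a summand on which `x` is the only fixed point. The Splitting axiom gives that summand
the same value `ind (F i) U₁` for both indices, and induction on the fixed point set finishes.
-/

theorem FixIn_eq_inter_of_subset {g : X → UConf n X} {V W : Set X} (h : V ⊆ W) :
    FixIn g V = FixIn g W ∩ V := by
  ext z
  exact ⟨fun ⟨hz, hm⟩ => ⟨⟨h hz, hm⟩, hz⟩, fun ⟨⟨_, hm⟩, hz⟩ => ⟨hz, hm⟩⟩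

theorem FixIn_subset (g : X → UConf n X) (W : Set X) : FixIn g W ⊆ W :=
  fun _ hz => hz.1

theorem adm_of_finite {g : X → UConf n X} {W : Set X} (hg : Continuous g) (hW : IsOpen W)
    (hfin : (FixIn g W).Finite) : Adm g W :=
  ⟨hg, hW, hfin.isCompact⟩

theorem SplitsOn.mono {g : X → UConf n X} {V V' : Set X} {F : Fin n → X → X}
    (h : SplitsOn g V F) (hV : V' ⊆ V) : SplitsOn g V' F :=
  ⟨fun i => (h.1 i).mono hV, fun x hx => h.2.1 x (hV hx), fun x hx y => h.2.2 x (hV hx) y⟩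

def LocallySplitsAt (g : X → UConf n X) (x : X) : Prop :=
  ∃ V : Set X, IsOpen V ∧ x ∈ V ∧ ∃ F : Fin n → X → X, SplitsOn g V F

theorem exists_isolating_split_of_FixIn_eq_insert [T2Space X] {g : X → UConf n X} {W s : Set X}
    {x : X} (hW : IsOpen W) (hfix : FixIn g W = insert x s) (hx : x ∉ s) (hs : s.Finite)
    (hsplit : LocallySplitsAt g x) :
    ∃ U₁ U₂ : Set X, ∃ F : Fin n → X → X, IsOpen U₁ ∧ IsOpen U₂ ∧ U₁ ⊆ W ∧ U₂ ⊆ W ∧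
      Disjoint U₁ U₂ ∧ FixIn g U₁ = {x} ∧ FixIn g U₂ = s ∧ SplitsOn g U₁ F := by
  obtain ⟨V, hV, hxV, F, hF⟩ := hsplit
  obtain ⟨O₁, O₂, hO₁, hO₂, hxO₁, hsO₂, hO⟩ :=
    SeparatedNhds.of_finite (Set.finite_singleton x) hs (Set.disjoint_singleton_left.mpr hx)
  have hxsW : insert x s ⊆ W := hfix ▸ FixIn_subset g W
  have hU₁W : W ∩ V ∩ O₁ ⊆ W := Set.inter_subset_left.trans Set.inter_subset_left
  refine ⟨W ∩ V ∩ O₁, W ∩ O₂, F, (hW.inter hV).inter hO₁, hW.inter hO₂, hU₁W,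
    Set.inter_subset_left, (hO.mono_left Set.inter_subset_right).mono_right Set.inter_subset_right,
    ?_, ?_, hF.mono (Set.inter_subset_left.trans Set.inter_subset_right)⟩
  · have hx₁ : x ∈ W ∩ V ∩ O₁ := ⟨⟨hxsW (Set.mem_insert x s), hxV⟩, hxO₁ rfl⟩
    have hs₁ : Disjoint s (W ∩ V ∩ O₁) := (hO.symm.mono_left hsO₂).mono_right Set.inter_subset_right
    rw [FixIn_eq_inter_of_subset hU₁W, hfix, Set.insert_inter_of_mem hx₁, hs₁.inter_eq,
      ← Set.singleton_def]
  · have hx₂ : x ∉ W ∩ O₂ := fun h => hO.ne_of_mem (hxO₁ rfl) h.2 rfl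
    rw [FixIn_eq_inter_of_subset Set.inter_subset_left, hfix, Set.insert_inter_of_notMem hx₂,
      Set.inter_eq_left]
    exact Set.subset_inter ((Set.subset_insert x s).trans hxsW) hsO₂

namespace IndexAxioms

variable {ind : (X → X) → Set X → ℝ} {ι ι₁ ι₂ : (X → UConf n X) → Set X → ℝ}
  {g : X → UConf n X} {W : Set X}

theorem eq_zero_of_FixIn_eq_empty (hax : IndexAxioms ind ι) (hadm : Adm g W)
    (hfix : FixIn g W = ∅) : ι g W = 0 := by
  have hadm₀ : Adm g ∅ := adm_of_finite hadm.1 isOpen_empty (by simp [FixIn])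
  have h₀ := hax.2.1 g ∅ ∅ ∅ hadm₀ isOpen_empty isOpen_empty le_rfl le_rfl (by simp)
    ((FixIn_subset g ∅).trans Set.subset_union_left)
  have hW := hax.2.1 g W ∅ ∅ hadm isOpen_empty isOpen_empty (Set.empty_subset W)
    (Set.empty_subset W) (by simp) (by simp [hfix])
  linarith

theorem eq_of_splitsOn_of_FixIn_eq_singleton (h₁ : IndexAxioms ind ι₁) (h₂ : IndexAxioms ind ι₂)
    {F : Fin n → X → X} {x : X} (hadm : Adm g W) (hF : SplitsOn g W F)
    (hfix : FixIn g W = {x}) : ι₁ g W = ι₂ g W := by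
  have hx : x ∈ FixIn g W := hfix ▸ rfl
  obtain ⟨i, hi⟩ := (hF.2.2 x hx.1 x).mp hx.2
  rw [h₁.2.2 g W F x hadm hF hfix i hi, h₂.2.2 g W F x hadm hF hfix i hi]

theorem eq_of_FixIn_finite [T2Space X] (h₁ : IndexAxioms ind ι₁) (h₂ : IndexAxioms ind ι₂)
    (hadm : Adm g W) (hfin : (FixIn g W).Finite)
    (hsplit : ∀ x ∈ FixIn g W, LocallySplitsAt g x) : ι₁ g W = ι₂ g W := by
  suffices ∀ s : Set X, s.Finite → ∀ W, Adm g W → FixIn g W = s →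
      (∀ x ∈ s, LocallySplitsAt g x) → ι₁ g W = ι₂ g W from this _ hfin W hadm rfl hsplit
  intro s hs
  induction s, hs using Set.Finite.induction_on with
  | empty =>
    intro W hadm hfix _
    rw [h₁.eq_zero_of_FixIn_eq_empty hadm hfix, h₂.eq_zero_of_FixIn_eq_empty hadm hfix]
  | @insert x s hx hs ih =>
    intro W hadm hfix hsplit
    obtain ⟨U₁, U₂, F, hU₁, hU₂, hU₁W, hU₂W, hdisj, hfix₁, hfix₂, hF⟩ :=
      exists_isolating_split_of_FixIn_eq_insert hadm.2.1 hfix hx hs (hsplit x (Set.mem_insert x s))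
    have hadm₁ : Adm g U₁ := adm_of_finite hadm.1 hU₁ (hfix₁ ▸ Set.finite_singleton x)
    have hadm₂ : Adm g U₂ := adm_of_finite hadm.1 hU₂ (hfix₂ ▸ hs)
    have hcover : FixIn g W ⊆ U₁ ∪ U₂ := by
      rw [hfix, Set.insert_eq, ← hfix₁, ← hfix₂]
      exact Set.union_subset_union (FixIn_subset g U₁) (FixIn_subset g U₂)
    rw [h₁.2.1 g W U₁ U₂ hadm hU₁ hU₂ hU₁W hU₂W hdisj hcover,
      h₂.2.1 g W U₁ U₂ hadm hU₁ hU₂ hU₁W hU₂W hdisj hcover,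
      eq_of_splitsOn_of_FixIn_eq_singleton h₁ h₂ hadm₁ hF hfix₁,
      ih U₂ hadm₂ hfix₂ fun y hy => hsplit y (Set.mem_insert_of_mem x hy)]

end IndexAxioms

theorem index_uniqueness_general [T2Space X]
    (ind : (X → X) → Set X → ℝ)
    (ι₁ ι₂ : (X → UConf n X) → Set X → ℝ)
    (h₁ : IndexAxioms ind ι₁) (h₂ : IndexAxioms ind ι₂)
    (hFF : ∀ f U, Adm f U → ∃ g : X → UConf n X, Adm g U ∧ AdmHomotopic f g U ∧
      (FixIn g U).Finite ∧
      ∀ x ∈ FixIn g U, ∃ V : Set X, IsOpen V ∧ x ∈ V ∧ V ⊆ U ∧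
        FixIn g U ∩ V = {x} ∧ SimplyConnectedSpace V ∧
        ∃ F : Fin n → X → X, SplitsOn g V F) :
    ∀ f U, Adm f U → ι₁ f U = ι₂ f U := by
  intro f U hadm
  obtain ⟨g, hg, hhom, hfin, hV⟩ := hFF f U hadm
  rw [h₁.1 f g U hadm hg hhom, h₂.1 f g U hadm hg hhom]
  refine h₁.eq_of_FixIn_finite h₂ hg hfin fun x hx => ?_
  obtain ⟨V, hV, hxV, -, -, -, hF⟩ := hV x hx
  exact ⟨V, hV, hxV, hF⟩

/-- Uniqueness of the n-valued fixed point index: two real-valued functions on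
admissible pairs of n-valued maps on a compact space, both satisfying the
Homotopy, Additivity, and Splitting axioms, coincide — assuming every admissible
pair is admissibly homotopic to a fix-finite pair whose fixed points admit simply
connected isolating neighborhoods on which the map splits. -/
theorem index_uniqueness [CompactSpace X] [T2Space X]
    (ind : (X → X) → Set X → ℝ)
    (ι₁ ι₂ : (X → UConf n X) → Set X → ℝ)
    (h₁ : IndexAxioms ind ι₁) (h₂ : IndexAxioms ind ι₂)
    (hFF : ∀ f U, Adm f U → ∃ g : X → UConf n X, Adm g U ∧ AdmHomotopic f g U ∧
      (FixIn g U).Finite ∧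
      ∀ x ∈ FixIn g U, ∃ V : Set X, IsOpen V ∧ x ∈ V ∧ V ⊆ U ∧
        FixIn g U ∩ V = {x} ∧ SimplyConnectedSpace V ∧
        ∃ F : Fin n → X → X, SplitsOn g V F) :
    ∀ f U, Adm f U → ι₁ f U = ι₂ f U :=
  index_uniqueness_general ind ι₁ ι₂ h₁ h₂ hFF
end
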